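/- Let Φ be the standard normal cdf, ν > 0, ε ∈ (0,1), and define f(x) := √ν·Φ^{-1}(x) − Φ^{-1}(x−ε) on (ε,1). Then f diverges to +∞ as x → ε⁺ and as x → 1⁻, f attains its minimum at some interior point y ∈ (ε,1), and at this point the stationarity condition (Φ^{-1}(y))² + ln ν = (Φ^{-1}(y−ε))² holds. -/

import Mathlib

open Filter Set

/-- Density of the normal distribution with mean `μ` and variance `v`. -/
noncomputable def gaussDensity (μ v x : ℝ) : ℝ :=
  (Real.sqrt (2 * Real.pi * v))⁻¹ * Real.exp (-((x - μ) ^ 2) / (2 * v))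

/-- Standard normal cumulative distribution function `Φ`. -/
noncomputable def stdPhi (x : ℝ) : ℝ := ∫ t in Set.Iic x, gaussDensity 0 1 t

/-- Inverse of the standard normal cdf. -/
noncomputable def stdPhiInv (p : ℝ) : ℝ := sInf {x : ℝ | p ≤ stdPhi x}

/-!
`Φ` is a differentiable increasing bijection `ℝ → (0,1)`, so `Φ⁻¹` is a continuous increasing
bijection `(0,1) → ℝ` with derivative `1 / φ(Φ⁻¹ x)`. Near `ε⁺` the term `-Φ⁻¹(x - ε)` blows
up while `√ν·Φ⁻¹(x)` stays bounded, and near `1⁻` it is the other way round; a continuous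
function on an open interval tending to `+∞` at both ends attains its minimum. At the
minimum `f' = √ν / φ(Φ⁻¹ y) - 1 / φ(Φ⁻¹(y - ε)) = 0`, and taking logarithms of
`√ν = φ(Φ⁻¹ y) / φ(Φ⁻¹(y - ε))` gives the stationarity condition.
-/

open MeasureTheory ProbabilityTheory Topology

theorem ContinuousOn.exists_isMinOn_Ioo_of_tendsto_atTop {α β : Type*}
    [ConditionallyCompleteLinearOrder α] [TopologicalSpace α] [OrderTopology α]
    [DenselyOrdered α] [LinearOrder β] [TopologicalSpace β] [ClosedIicTopology β]
    {f : α → β} {a b : α} (hab : a < b) (hf : ContinuousOn f (Ioo a b))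
    (ha : Tendsto f (𝓝[>] a) atTop) (hb : Tendsto f (𝓝[<] b) atTop) :
    ∃ y ∈ Ioo a b, IsMinOn f (Ioo a b) y := by
  obtain ⟨x₀, hx₀⟩ := exists_between hab
  obtain ⟨c, hc, hac⟩ := (mem_nhdsGT_iff_exists_mem_Ioc_Ioo_subset hx₀.1).1
    (ha.eventually_ge_atTop (f x₀))
  obtain ⟨d, hd, hdb⟩ := (mem_nhdsLT_iff_exists_mem_Ico_Ioo_subset hx₀.2).1
    (hb.eventually_ge_atTop (f x₀))
  have hK : Icc c d ⊆ Ioo a b := Icc_subset_Ioo hc.1 hd.2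
  obtain ⟨y, hy, hmin⟩ := isCompact_Icc.exists_isMinOn ⟨x₀, hc.2, hd.1⟩ (hf.mono hK)
  refine ⟨y, hK hy, fun x hx => ?_⟩
  have hyx₀ : f y ≤ f x₀ := hmin ⟨hc.2, hd.1⟩
  rcases lt_or_ge x c with hxc | hcx
  · exact hyx₀.trans (hac ⟨hx.1, hxc⟩)
  rcases le_or_gt x d with hxd | hdx
  · exact hmin ⟨hcx, hxd⟩
  · exact hyx₀.trans (hdb ⟨hdx, hx.2⟩)

lemma gaussDensity_zero_one : gaussDensity 0 1 = gaussianPDFReal 0 1 := by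
  ext x
  simp [gaussDensity, gaussianPDFReal, neg_div]

lemma gaussDensity_zero_one_pos (x : ℝ) : 0 < gaussDensity 0 1 x := by
  rw [gaussDensity_zero_one]
  exact gaussianPDFReal_pos 0 1 x one_ne_zero

lemma continuous_gaussDensity (μ v : ℝ) : Continuous (gaussDensity μ v) := by
  unfold gaussDensity
  fun_prop

lemma integrable_gaussDensity_zero_one : Integrable (gaussDensity 0 1) := by
  rw [gaussDensity_zero_one]
  exact integrable_gaussianPDFReal 0 1

lemma integral_gaussDensity_zero_one : ∫ x, gaussDensity 0 1 x = 1 := by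
  rw [gaussDensity_zero_one]
  exact integral_gaussianPDFReal_eq_one 0 one_ne_zero

lemma gaussDensity_zero_one_div (a b : ℝ) :
    gaussDensity 0 1 a / gaussDensity 0 1 b = Real.exp ((b ^ 2 - a ^ 2) / 2) := by
  simp only [gaussDensity, sub_zero, mul_one]
  rw [mul_div_mul_left _ _ (by positivity), ← Real.exp_sub]
  ring_nf

lemma hasDerivAt_stdPhi (x : ℝ) : HasDerivAt stdPhi (gaussDensity 0 1 x) x := by
  have hΦ : stdPhi = fun u => (∫ t in (0 : ℝ)..u, gaussDensity 0 1 t) + stdPhi 0 := by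
    funext u
    rw [← intervalIntegral.integral_Iic_sub_Iic integrable_gaussDensity_zero_one.integrableOn
      integrable_gaussDensity_zero_one.integrableOn]
    simp [stdPhi]
  rw [hΦ]
  exact (intervalIntegral.integral_hasDerivAt_right
    integrable_gaussDensity_zero_one.intervalIntegrable
    (continuous_gaussDensity 0 1).aestronglyMeasurable.stronglyMeasurableAtFilter
    (continuous_gaussDensity 0 1).continuousAt).add_const _

lemma continuous_stdPhi : Continuous stdPhi :=
  continuous_iff_continuousAt.2 fun x => (hasDerivAt_stdPhi x).continuousAt

lemma strictMono_stdPhi : StrictMono stdPhi :=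
  strictMono_of_deriv_pos fun x => by
    rw [(hasDerivAt_stdPhi x).deriv]
    exact gaussDensity_zero_one_pos x

lemma stdPhi_mem_Ioo (x : ℝ) : stdPhi x ∈ Ioo (0 : ℝ) 1 := by
  have hnonneg : 0 ≤ stdPhi (x - 1) :=
    setIntegral_nonneg measurableSet_Iic fun t _ => (gaussDensity_zero_one_pos t).le
  have hle_one : stdPhi (x + 1) ≤ 1 := by
    rw [← integral_gaussDensity_zero_one]
    exact setIntegral_le_integral integrable_gaussDensity_zero_one
      (ae_of_all _ fun t => (gaussDensity_zero_one_pos t).le)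
  exact ⟨hnonneg.trans_lt (strictMono_stdPhi (by linarith)),
    (strictMono_stdPhi (by linarith)).trans_le hle_one⟩

lemma tendsto_stdPhi_atTop : Tendsto stdPhi atTop (𝓝 1) := by
  have h := (aecover_Iic (tendsto_id (α := ℝ)) (μ := volume)
    ).integral_tendsto_of_countably_generated integrable_gaussDensity_zero_one
  rwa [integral_gaussDensity_zero_one] at h

lemma stdPhi_eq_one_sub_integral_Ioi (x : ℝ) :
    stdPhi x = 1 - ∫ t in Ioi x, gaussDensity 0 1 t := by
  have h := intervalIntegral.integral_Iic_add_Ioi (b := x)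
    integrable_gaussDensity_zero_one.integrableOn integrable_gaussDensity_zero_one.integrableOn
  rw [integral_gaussDensity_zero_one] at h
  rw [stdPhi]
  linarith

lemma tendsto_stdPhi_atBot : Tendsto stdPhi atBot (𝓝 0) := by
  have h := (aecover_Ioi (tendsto_id (α := ℝ)) (μ := volume) (l := atBot)
    ).integral_tendsto_of_countably_generated integrable_gaussDensity_zero_one
  rw [integral_gaussDensity_zero_one] at h
  simpa [funext stdPhi_eq_one_sub_integral_Ioi] using (tendsto_const_nhds (x := (1 : ℝ))).sub h

lemma stdPhiInv_stdPhi (x : ℝ) : stdPhiInv (stdPhi x) = x := by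
  have h : {y : ℝ | stdPhi x ≤ stdPhi y} = Ici x := by
    ext y
    simp [strictMono_stdPhi.le_iff_le]
  rw [stdPhiInv, h, csInf_Ici]

lemma stdPhi_stdPhiInv {p : ℝ} (hp : p ∈ Ioo (0 : ℝ) 1) : stdPhi (stdPhiInv p) = p := by
  obtain ⟨a, ha⟩ := (tendsto_stdPhi_atBot.eventually_lt_const hp.1).exists
  obtain ⟨b, hb⟩ := (tendsto_stdPhi_atTop.eventually_const_lt hp.2).exists
  have hab : a ≤ b := strictMono_stdPhi.le_iff_le.1 (by linarith)
  obtain ⟨x, -, rfl⟩ :=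
    intermediate_value_Icc hab continuous_stdPhi.continuousOn ⟨ha.le, hb.le⟩
  rw [stdPhiInv_stdPhi]

lemma strictMonoOn_stdPhiInv : StrictMonoOn stdPhiInv (Ioo (0 : ℝ) 1) := by
  intro p hp q hq hpq
  rw [← strictMono_stdPhi.lt_iff_lt, stdPhi_stdPhiInv hp, stdPhi_stdPhiInv hq]
  exact hpq

lemma stdPhiInv_image_Ioo : stdPhiInv '' Ioo (0 : ℝ) 1 = univ :=
  eq_univ_of_forall fun x => ⟨stdPhi x, stdPhi_mem_Ioo x, stdPhiInv_stdPhi x⟩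

lemma continuousOn_stdPhiInv : ContinuousOn stdPhiInv (Ioo (0 : ℝ) 1) := fun _ hp =>
  (strictMonoOn_stdPhiInv.continuousAt_of_image_mem_nhds (isOpen_Ioo.mem_nhds hp)
    (by rw [stdPhiInv_image_Ioo]; exact univ_mem)).continuousWithinAt

lemma tendsto_stdPhiInv_nhdsGT_zero : Tendsto stdPhiInv (𝓝[>] 0) atBot := by
  refine tendsto_atBot.2 fun M => ?_
  have hM := stdPhi_mem_Ioo M
  filter_upwards [Ioo_mem_nhdsGT hM.1] with p hp
  simpa [stdPhiInv_stdPhi] using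
    (strictMonoOn_stdPhiInv ⟨hp.1, hp.2.trans hM.2⟩ hM hp.2).le

lemma tendsto_stdPhiInv_nhdsLT_one : Tendsto stdPhiInv (𝓝[<] 1) atTop := by
  refine tendsto_atTop.2 fun M => ?_
  have hM := stdPhi_mem_Ioo M
  filter_upwards [Ioo_mem_nhdsLT hM.2] with p hp
  simpa [stdPhiInv_stdPhi] using
    (strictMonoOn_stdPhiInv hM ⟨hM.1.trans hp.1, hp.2⟩ hp.1).le

lemma hasDerivAt_stdPhiInv {p : ℝ} (hp : p ∈ Ioo (0 : ℝ) 1) :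
    HasDerivAt stdPhiInv (gaussDensity 0 1 (stdPhiInv p))⁻¹ p := by
  refine HasDerivAt.of_local_left_inverse
    (continuousOn_stdPhiInv.continuousAt (isOpen_Ioo.mem_nhds hp))
    (hasDerivAt_stdPhi _) (gaussDensity_zero_one_pos _).ne' ?_
  filter_upwards [isOpen_Ioo.mem_nhds hp] with q hq
  exact stdPhi_stdPhiInv hq

noncomputable def sesquiObjective (ν ε x : ℝ) : ℝ :=
  Real.sqrt ν * stdPhiInv x - stdPhiInv (x - ε)

section sesquiObjective

variable {ε : ℝ}

lemma continuousOn_sesquiObjective (ν : ℝ) (hε : 0 ≤ ε) :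
    ContinuousOn (sesquiObjective ν ε) (Ioo ε 1) := by
  have hshift : MapsTo (· - ε) (Ioo ε 1) (Ioo 0 1) := fun x hx =>
    ⟨sub_pos.2 hx.1, by linarith [hx.2]⟩
  exact (continuousOn_const.mul (continuousOn_stdPhiInv.mono (Ioo_subset_Ioo_left hε))).sub
    (continuousOn_stdPhiInv.comp (continuous_sub_right ε).continuousOn hshift)

lemma tendsto_sesquiObjective_nhdsGT (ν : ℝ) (hε : ε ∈ Ioo 0 1) :
    Tendsto (sesquiObjective ν ε) (𝓝[>] ε) atTop := by
  have hshift : Tendsto (· - ε) (𝓝[>] ε) (𝓝[>] 0) := by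
    have h := (map_subRight_nhdsGT (c := ε) (a := ε)).le
    rwa [sub_self] at h
  have hbounded : Tendsto (fun x => Real.sqrt ν * stdPhiInv x) (𝓝[>] ε)
      (𝓝 (Real.sqrt ν * stdPhiInv ε)) :=
    ((continuousOn_stdPhiInv.continuousAt (isOpen_Ioo.mem_nhds hε)).tendsto.const_mul _).mono_left
      nhdsWithin_le_nhds
  exact (hbounded.add_atTop (tendsto_neg_atBot_atTop.comp
    (tendsto_stdPhiInv_nhdsGT_zero.comp hshift))).congr fun x => (sub_eq_add_neg _ _).symm

lemma tendsto_sesquiObjective_nhdsLT {ν : ℝ} (hν : 0 < ν) (hε : ε ∈ Ioo 0 1) :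
    Tendsto (sesquiObjective ν ε) (𝓝[<] 1) atTop := by
  have hε' : 1 - ε ∈ Ioo (0 : ℝ) 1 := ⟨by linarith [hε.2], by linarith [hε.1]⟩
  have hbounded : Tendsto (fun x => -stdPhiInv (x - ε)) (𝓝[<] 1) (𝓝 (-stdPhiInv (1 - ε))) :=
    (((continuousOn_stdPhiInv.continuousAt (isOpen_Ioo.mem_nhds hε')).tendsto.comp
      ((continuous_sub_right ε).tendsto 1)).neg).mono_left nhdsWithin_le_nhds
  exact ((tendsto_stdPhiInv_nhdsLT_one.const_mul_atTop (Real.sqrt_pos.2 hν)).atTop_add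
    hbounded).congr fun x => (sub_eq_add_neg _ _).symm

lemma hasDerivAt_sesquiObjective (ν : ℝ) {y : ℝ} (hε : 0 ≤ ε) (hy : y ∈ Ioo ε 1) :
    HasDerivAt (sesquiObjective ν ε)
      (Real.sqrt ν * (gaussDensity 0 1 (stdPhiInv y))⁻¹
        - (gaussDensity 0 1 (stdPhiInv (y - ε)))⁻¹) y := by
  have hy₀ : y ∈ Ioo (0 : ℝ) 1 := ⟨hε.trans_lt hy.1, hy.2⟩
  have hyε : y - ε ∈ Ioo (0 : ℝ) 1 := ⟨sub_pos.2 hy.1, by linarith [hy.2]⟩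
  have hshift := (hasDerivAt_stdPhiInv hyε).comp y ((hasDerivAt_id y).sub_const ε)
  rw [mul_one] at hshift
  exact ((hasDerivAt_stdPhiInv hy₀).const_mul _).sub hshift

lemma sq_stdPhiInv_add_log_eq_of_isLocalMin {ν : ℝ} (hν : 0 < ν) (hε : 0 ≤ ε) {y : ℝ}
    (hy : y ∈ Ioo ε 1) (hmin : IsLocalMin (sesquiObjective ν ε) y) :
    stdPhiInv y ^ 2 + Real.log ν = stdPhiInv (y - ε) ^ 2 := by
  have hcrit := hmin.hasDerivAt_eq_zero (hasDerivAt_sesquiObjective ν hε hy)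
  set a := stdPhiInv y
  set b := stdPhiInv (y - ε)
  have hsqrt : Real.sqrt ν = Real.exp ((b ^ 2 - a ^ 2) / 2) := by
    rw [← gaussDensity_zero_one_div]
    have := gaussDensity_zero_one_pos a
    have := gaussDensity_zero_one_pos b
    field_simp at hcrit ⊢
    linarith
  have hlog := congrArg Real.log hsqrt
  rw [Real.log_sqrt hν.le, Real.log_exp] at hlog
  linarith

end sesquiObjective

/-- The function `f(x) = √ν·Φ⁻¹(x) − Φ⁻¹(x−ε)` on `(ε,1)` diverges to `+∞` at both
endpoints, attains its minimum at an interior point `y`, and at this point the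
stationarity condition `(Φ⁻¹(y))² + ln ν = (Φ⁻¹(y−ε))²` holds. -/
theorem sesqui_variational_min (ν ε : ℝ) (hν : 0 < ν) (hε : ε ∈ Set.Ioo (0 : ℝ) 1) :
    let f : ℝ → ℝ := fun x => Real.sqrt ν * stdPhiInv x - stdPhiInv (x - ε)
    Tendsto f (nhdsWithin ε (Set.Ioi ε)) atTop ∧
    Tendsto f (nhdsWithin 1 (Set.Iio 1)) atTop ∧
    ∃ y ∈ Set.Ioo ε 1, (∀ x ∈ Set.Ioo ε 1, f y ≤ f x) ∧
      (stdPhiInv y) ^ 2 + Real.log ν = (stdPhiInv (y - ε)) ^ 2 := by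
  have hleft := tendsto_sesquiObjective_nhdsGT ν hε
  have hright := tendsto_sesquiObjective_nhdsLT hν hε
  obtain ⟨y, hy, hmin⟩ :=
    (continuousOn_sesquiObjective ν hε.1.le).exists_isMinOn_Ioo_of_tendsto_atTop hε.2 hleft hright
  exact ⟨hleft, hright, y, hy, hmin, sq_stdPhiInv_add_log_eq_of_isLocalMin hν hε.1.le hy
    (hmin.isLocalMin (isOpen_Ioo.mem_nhds hy))⟩
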